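/- arXiv:2102.02484 — 7 statements merged into one kernel-verified Lean document; each statement's English description precedes it below -/
import Mathlib

section
/- If G is a finite simple graph with no isolated vertices, maximum degree at most k−1, and at least k² vertices, then G contains a minimal vertex cover of size at least k. -/
def IsVC {V : Type*} (G : SimpleGraph V) (X : Finset V) : Prop :=
  ∀ ⦃a b : V⦄, G.Adj a b → a ∈ X ∨ b ∈ X

def IsMinVC {V : Type*} (G : SimpleGraph V) (X : Finset V) : Prop :=
  IsVC G X ∧ ∀ Y : Finset V, Y ⊂ X → ¬ IsVC G Y

/-- A graph with no isolated vertices, maximum degree at most `k-1`, and at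
least `k^2` vertices contains a minimal vertex cover of size at least `k`. -/
theorem trivial_quadratic_kernel {V : Type*} [Fintype V] [DecidableEq V]
    (G : SimpleGraph V) [DecidableRel G.Adj] (k : ℕ) (hk : 0 < k)
    (hiso : ∀ v : V, 0 < G.degree v)
    (hΔ : ∀ v : V, G.degree v ≤ k - 1)
    (hn : k ^ 2 ≤ Fintype.card V) :
    ∃ X : Finset V, IsMinVC G X ∧ k ≤ X.card := by
  classical
  -- pick a vertex cover of minimum cardinality
  have hne : (Finset.univ.powerset.filter (fun Y : Finset V => IsVC G Y)).Nonempty := by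
    refine ⟨Finset.univ, ?_⟩
    simp only [Finset.mem_filter, Finset.mem_powerset]
    exact ⟨le_refl _, fun a b _ => Or.inl (Finset.mem_univ a)⟩
  obtain ⟨X, hXmem, hXmin⟩ := Finset.exists_min_image _ Finset.card hne
  have hXvc : IsVC G X := (Finset.mem_filter.mp hXmem).2
  have hXmin' : ∀ Y : Finset V, IsVC G Y → X.card ≤ Y.card := by
    intro Y hY
    refine hXmin Y ?_
    simp only [Finset.mem_filter, Finset.mem_powerset]
    exact ⟨Finset.subset_univ _, hY⟩
  refine ⟨X, ⟨hXvc, ?_⟩, ?_⟩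
  · intro Y hY hYvc
    exact absurd (hXmin' Y hYvc) (not_le.mpr (Finset.card_lt_card hY))
  -- counting
  · have hnb : ∀ v : V, v ∉ X → ∃ w, w ∈ X ∧ G.Adj v w := by
      intro v hv
      obtain ⟨w, hw⟩ := (G.degree_pos_iff_exists_adj v).mp (hiso v)
      exact ⟨w, (hXvc hw).resolve_left hv, hw⟩
    let f : V → V := fun v => if h : v ∈ X then v else (hnb v h).choose
    have hfX : ∀ v ∈ Finset.univ, f v ∈ X := by
      intro v _
      by_cases h : v ∈ X
      · simp [f, h]
      · simpa [f, h] using (hnb v h).choose_spec.1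
    have hfib : ∀ x ∈ X, (Finset.univ.filter fun v => f v = x).card ≤ k := by
      intro x hx
      have hsub : (Finset.univ.filter fun v => f v = x) ⊆
          insert x (G.neighborFinset x) := by
        intro v hv
        have hv' : f v = x := (Finset.mem_filter.mp hv).2
        by_cases h : v ∈ X
        · simp only [f, dif_pos h] at hv'
          simp [hv']
        · simp only [f, dif_neg h] at hv'
          have hadj := (hnb v h).choose_spec.2
          rw [hv'] at hadj
          exact Finset.mem_insert_of_mem (by
            rw [SimpleGraph.mem_neighborFinset]; exact hadj.symm)
      calc (Finset.univ.filter fun v => f v = x).card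
          ≤ (insert x (G.neighborFinset x)).card := Finset.card_le_card hsub
        _ ≤ (G.neighborFinset x).card + 1 := Finset.card_insert_le _ _
        _ = G.degree x + 1 := by rw [SimpleGraph.card_neighborFinset_eq_degree]
        _ ≤ (k - 1) + 1 := by exact Nat.add_le_add_right (hΔ x) 1
        _ = k := Nat.succ_pred_eq_of_pos hk
    have hcount : Fintype.card V ≤ k * X.card := by
      simpa [Finset.card_univ] using
        Finset.card_le_mul_card_image_of_maps_to hfX k hfib
    have : k * k ≤ k * X.card := le_trans (by rw [← pow_two]; exact hn) hcount
    exact Nat.le_of_mul_le_mul_left this hk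
end

section
/- Let G be a bull-free graph, C a clique in G, and S an independent set disjoint from C. Suppose S₁ ⊆ S is a set of vertices each having at least one neighbor in C, such that for any two (not necessarily distinct) x, y ∈ S₁ we have |N_C(x) ∪ N_C(y)| ≤ |C| − 1. Then the neighborhoods {N_C(x) : x ∈ S₁} are totally ordered by inclusion, i.e., for all x, y ∈ S₁ either N_C(x) ⊆ N_C(y) or N_C(y) ⊆ N_C(x). -/
/-- The bull: a triangle `0,1,2` with pendant vertices `3` (adjacent to `1`)
and `4` (adjacent to `2`). -/
def Bull : SimpleGraph (Fin 5) :=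
  SimpleGraph.fromRel (fun a b =>
    (a, b) ∈ [((0 : Fin 5), (1 : Fin 5)), (0, 2), (1, 2), (1, 3), (2, 4)])

instance : DecidableRel Bull.Adj := fun a b =>
  decidable_of_iff _ (SimpleGraph.fromRel_adj _ a b).symm

/-- In a bull-free graph, given a clique `C` and an independent set `S` disjoint
from `C`, if `S₁ ⊆ S` consists of vertices with a neighbor in `C` whose
`C`-neighborhoods pairwise fail to cover `C`, then these neighborhoods are
totally ordered by inclusion. -/
theorem bull_free_chain {V : Type*} [Fintype V] [DecidableEq V]
    (G : SimpleGraph V) [DecidableRel G.Adj]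
    (hbf : IsEmpty (Bull ↪g G))
    (C S : Finset V)
    (hC : ∀ a ∈ C, ∀ b ∈ C, a ≠ b → G.Adj a b)
    (hS : ∀ a ∈ S, ∀ b ∈ S, ¬ G.Adj a b)
    (hdisj : Disjoint C S)
    (S1 : Finset V) (hS1 : S1 ⊆ S)
    (hnbr : ∀ x ∈ S1, ∃ c ∈ C, G.Adj x c)
    (hcov : ∀ x ∈ S1, ∀ y ∈ S1,
      (C.filter (G.Adj x) ∪ C.filter (G.Adj y)).card ≤ C.card - 1) :
    ∀ x ∈ S1, ∀ y ∈ S1,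
      C.filter (G.Adj x) ⊆ C.filter (G.Adj y) ∨
      C.filter (G.Adj y) ⊆ C.filter (G.Adj x) := by
  intro x hx y hy
  by_contra hcon
  push_neg at hcon
  obtain ⟨hxy, hyx⟩ := hcon
  obtain ⟨a, haU, haN⟩ := Finset.not_subset.1 hxy
  obtain ⟨b, hbU, hbN⟩ := Finset.not_subset.1 hyx
  simp only [Finset.mem_filter, not_and] at haU haN hbU hbN
  obtain ⟨haC, hxa⟩ := haU
  obtain ⟨hbC, hyb⟩ := hbU
  have hya : ¬ G.Adj y a := haN haC
  have hxb : ¬ G.Adj x b := hbN hbC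
  -- find c ∈ C not covered
  have hcard : (C.filter (G.Adj x) ∪ C.filter (G.Adj y)).card < C.card := by
    have h1 := hcov x hx y hy
    have h2 : 1 ≤ C.card := Finset.card_pos.2 ⟨a, haC⟩
    omega
  have hsub : (C.filter (G.Adj x) ∪ C.filter (G.Adj y)) ⊆ C := by
    intro v hv
    rcases Finset.mem_union.1 hv with h | h <;> exact (Finset.mem_filter.1 h).1
  obtain ⟨c, hcC, hcU⟩ := Finset.exists_of_ssubset ⟨hsub, fun h => absurd (Finset.card_le_card h) (by omega)⟩
  simp only [Finset.mem_union, Finset.mem_filter, not_or, not_and] at hcU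
  have hxc : ¬ G.Adj x c := hcU.1 hcC
  have hyc : ¬ G.Adj y c := hcU.2 hcC
  -- basic facts
  have hxS : x ∈ S := hS1 hx
  have hyS : y ∈ S := hS1 hy
  have hxnC : x ∉ C := fun h => (Finset.disjoint_left.1 hdisj h) hxS
  have hynC : y ∉ C := fun h => (Finset.disjoint_left.1 hdisj h) hyS
  have hxy' : x ≠ y := by rintro rfl; exact hyx le_rfl
  have hab : a ≠ b := fun h => hxb (h ▸ hxa)
  have hac : a ≠ c := fun h => hxc (h ▸ hxa)
  have hbc : b ≠ c := fun h => hyc (h ▸ hyb)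
  have hca : G.Adj c a := hC c hcC a haC (Ne.symm hac)
  have hcb : G.Adj c b := hC c hcC b hbC (Ne.symm hbc)
  have hab' : G.Adj a b := hC a haC b hbC hab
  have hxyn : ¬ G.Adj x y := hS x hxS y hyS
  have hxa' : x ≠ a := fun h => hxnC (h ▸ haC)
  have hxb' : x ≠ b := fun h => hxnC (h ▸ hbC)
  have hxc' : x ≠ c := fun h => hxnC (h ▸ hcC)
  have hya' : y ≠ a := fun h => hynC (h ▸ haC)
  have hyb' : y ≠ b := fun h => hynC (h ▸ hbC)
  have hyc' : y ≠ c := fun h => hynC (h ▸ hcC)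
  refine hbf.false ⟨⟨![c, a, b, x, y], ?_⟩, ?_⟩
  · intro i j h
    fin_cases i <;> fin_cases j <;>
      simp only [Matrix.cons_val_zero, Matrix.cons_val_one, Matrix.cons_val_two,
        Matrix.cons_val_three, Matrix.cons_val_four, Matrix.head_cons,
        Matrix.tail_cons, Matrix.cons_val_fin_one] at h <;>
      first
        | rfl
        | exact absurd h (by first
            | exact hab | exact hab.symm | exact hac | exact hac.symm
            | exact hbc | exact hbc.symm | exact hxa' | exact hxa'.symm
            | exact hxb' | exact hxb'.symm | exact hxc' | exact hxc'.symm
            | exact hya' | exact hya'.symm | exact hyb' | exact hyb'.symm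
            | exact hyc' | exact hyc'.symm | exact hxy' | exact hxy'.symm)
  · intro i j
    fin_cases i <;> fin_cases j <;>
      simp only [Matrix.cons_val_zero, Matrix.cons_val_one, Matrix.cons_val_two,
        Matrix.cons_val_three, Matrix.cons_val_four, Matrix.head_cons,
        Matrix.tail_cons, Matrix.cons_val_fin_one,
        Function.Embedding.coeFn_mk] <;>
      first
        | exact iff_of_true (by first
            | assumption | exact hca.symm | exact hcb.symm | exact hab'.symm
            | exact hxa.symm | exact hyb.symm) (by decide)
        | exact iff_of_false (by first
            | exact G.irrefl
            | assumption
            | exact fun h => hya h.symm | exact fun h => hxb h.symm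
            | exact fun h => hxc h.symm | exact fun h => hyc h.symm
            | exact fun h => hxyn h.symm) (by decide)
end

section
/- Let t ≥ 3, let G be a t-bull-free graph, C a clique in G, and S an independent set disjoint from C. Suppose S₁ ⊆ S consists of vertices each having at least one neighbor in C, such that for any two (not necessarily distinct) x, y ∈ S₁, |N_C(x) ∪ N_C(y)| ≤ |C| − (t−2). Then for all x, y ∈ S₁, either N_C(x) ⊆ N_C(y) or N_C(y) ⊆ N_C(x). -/
/-- The `t`-bull: a clique on the vertices `0, …, t-1` with two pendant
vertices `t` (adjacent to `0`) and `t+1` (adjacent to `1`). -/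
def TBull (t : ℕ) : SimpleGraph (Fin (t + 2)) :=
  SimpleGraph.fromRel (fun a b =>
    (a.val < t ∧ b.val < t) ∨ (a.val = t ∧ b.val = 0) ∨ (a.val = t + 1 ∧ b.val = 1))

lemma tbull_adj (k : ℕ) (i j : Fin (k + 3 + 2)) :
    (TBull (k+3)).Adj i j ↔ i.val ≠ j.val ∧
      ((i.val < k+3 ∧ j.val < k+3) ∨ (i.val = k+3 ∧ j.val = 0) ∨ (i.val = k+4 ∧ j.val = 1) ∨
       (j.val < k+3 ∧ i.val < k+3) ∨ (j.val = k+3 ∧ i.val = 0) ∨ (j.val = k+4 ∧ i.val = 1)) := by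
  simp only [TBull, SimpleGraph.fromRel_adj, Fin.ne_iff_vne]
  constructor
  · rintro ⟨h, h2⟩; exact ⟨h, by tauto⟩
  · rintro ⟨h, h2⟩; exact ⟨h, by omega⟩

lemma build_tbull {V : Type*} (G : SimpleGraph V) (k : ℕ) (a b x y : V)
    (e : Fin (k+1) → V) (he : Function.Injective e)
    (hab : G.Adj a b)
    (hae : ∀ i, G.Adj a (e i)) (hbe : ∀ i, G.Adj b (e i))
    (hee : ∀ i j, i ≠ j → G.Adj (e i) (e j))
    (hxa : G.Adj x a) (hyb : G.Adj y b)
    (hxb : ¬ G.Adj x b) (hya : ¬ G.Adj y a)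
    (hxe : ∀ i, ¬ G.Adj x (e i)) (hye : ∀ i, ¬ G.Adj y (e i))
    (hxy : ¬ G.Adj x y)
    (hxb' : x ≠ b) (hya' : y ≠ a)
    (hxe' : ∀ i, x ≠ e i) (hye' : ∀ i, y ≠ e i)
    (hxy' : x ≠ y) :
    Nonempty (TBull (k+3) ↪g G) := by
  classical
  set f : Fin (k+3+2) → V := fun i =>
    if i.val = 0 then a else if i.val = 1 then b else
    if h : i.val < k+3 then e ⟨i.val - 2, by omega⟩ else
    if i.val = k+3 then x else y with hf
  have f0 : ∀ i : Fin (k+3+2), i.val = 0 → f i = a := by intro i h; simp only [hf]; rw [if_pos h]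
  have f1 : ∀ i : Fin (k+3+2), i.val = 1 → f i = b := by intro i h; simp only [hf]; rw [if_neg (by omega), if_pos h]
  have fe : ∀ (i : Fin (k+3+2)) (h2 : 2 ≤ i.val) (h3 : i.val < k+3),
      f i = e ⟨i.val - 2, by omega⟩ := by
    intro i h2 h3
    simp only [hf]
    rw [if_neg (by omega), if_neg (by omega), dif_pos h3]
  have fx : ∀ i : Fin (k+3+2), i.val = k+3 → f i = x := by
    intro i h
    simp only [hf]
    rw [if_neg (by omega), if_neg (by omega), dif_neg (by omega), if_pos h]
  have fy : ∀ i : Fin (k+3+2), i.val = k+4 → f i = y := by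
    intro i h
    simp only [hf]
    rw [if_neg (by omega), if_neg (by omega), dif_neg (by omega), if_neg (by omega)]
  have shape : ∀ i : Fin (k+3+2), i.val = 0 ∨ i.val = 1 ∨ (2 ≤ i.val ∧ i.val < k+3) ∨
      i.val = k+3 ∨ i.val = k+4 := by intro i; have := i.isLt; omega
  -- basic distinctness
  have hab' : a ≠ b := hab.ne
  have hxa' : x ≠ a := hxa.ne
  have hyb' : y ≠ b := hyb.ne
  have hae' : ∀ i, a ≠ e i := fun i => (hae i).ne
  have hbe' : ∀ i, b ≠ e i := fun i => (hbe i).ne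
  refine ⟨⟨⟨f, ?_⟩, ?_⟩⟩
  · intro i j hij
    rcases shape i with hi | hi | ⟨hi2, hi3⟩ | hi | hi <;>
      rcases shape j with hj | hj | ⟨hj2, hj3⟩ | hj | hj
    all_goals first
      | (exact Fin.ext (by omega))
      | skip
    all_goals (
      first
        | rw [f0 i hi] at hij | rw [f1 i hi] at hij | rw [fe i hi2 hi3] at hij
        | rw [fx i hi] at hij | rw [fy i hi] at hij)
    all_goals (
      first
        | rw [f0 j hj] at hij | rw [f1 j hj] at hij | rw [fe j hj2 hj3] at hij
        | rw [fx j hj] at hij | rw [fy j hj] at hij)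
    all_goals first
      | (exact absurd hij (by first
          | exact hab' | exact hab'.symm | exact hxa' | exact hxa'.symm
          | exact hyb' | exact hyb'.symm | exact hxy' | exact hxy'.symm
          | exact hxb' | exact hxb'.symm | exact hya' | exact hya'.symm
          | exact hae' _ | exact (hae' _).symm | exact hbe' _ | exact (hbe' _).symm
          | exact hxe' _ | exact (hxe' _).symm | exact hye' _ | exact (hye' _).symm))
      | skip
    have h2 := he hij
    have h3 : i.val - 2 = j.val - 2 := congrArg Fin.val h2
    exact Fin.ext (by omega)
  · intro i j
    show G.Adj (f i) (f j) ↔ (TBull (k+3)).Adj i j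
    rw [tbull_adj]
    rcases shape i with hi | hi | ⟨hi2, hi3⟩ | hi | hi <;>
      rcases shape j with hj | hj | ⟨hj2, hj3⟩ | hj | hj
    all_goals (
      first
        | rw [f0 i hi] | rw [f1 i hi] | rw [fe i hi2 hi3]
        | rw [fx i hi] | rw [fy i hi])
    all_goals (
      first
        | rw [f0 j hj] | rw [f1 j hj] | rw [fe j hj2 hj3]
        | rw [fx j hj] | rw [fy j hj])
    -- now 25 goals of the form G.Adj u v ↔ arithmetic
    all_goals first
      | exact iff_of_false (G.irrefl) (by omega)
      | exact iff_of_true hab (by omega)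
      | exact iff_of_true hab.symm (by omega)
      | exact iff_of_true (hae _) (by omega)
      | exact iff_of_true ((hae _).symm) (by omega)
      | exact iff_of_true (hbe _) (by omega)
      | exact iff_of_true ((hbe _).symm) (by omega)
      | exact iff_of_true hxa (by omega)
      | exact iff_of_true hxa.symm (by omega)
      | exact iff_of_true hyb (by omega)
      | exact iff_of_true hyb.symm (by omega)
      | exact iff_of_false hxb (by omega)
      | exact iff_of_false (fun h => hxb h.symm) (by omega)
      | exact iff_of_false hya (by omega)
      | exact iff_of_false (fun h => hya h.symm) (by omega)
      | exact iff_of_false (hxe _) (by omega)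
      | exact iff_of_false (fun h => hxe _ h.symm) (by omega)
      | exact iff_of_false (hye _) (by omega)
      | exact iff_of_false (fun h => hye _ h.symm) (by omega)
      | exact iff_of_false hxy (by omega)
      | exact iff_of_false (fun h => hxy h.symm) (by omega)
      | skip
    -- remaining: the e-e case
    rcases eq_or_ne i.val j.val with hv | hv
    · rw [show (⟨i.val - 2, by omega⟩ : Fin (k+1)) = ⟨j.val - 2, by omega⟩ from
        Fin.ext (show i.val - 2 = j.val - 2 by omega)]
      exact iff_of_false (G.irrefl) (by omega)
    · exact iff_of_true (hee _ _ (by simp only [Fin.ne_iff_vne]; show i.val - 2 ≠ j.val - 2; omega)) (by omega)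
/-- In a `t`-bull-free graph, given a clique `C` and an independent set `S`
disjoint from `C`, if `S₁ ⊆ S` consists of vertices with a neighbor in `C`
whose `C`-neighborhoods pairwise leave at least `t-2` vertices of `C`
uncovered, then these neighborhoods are totally ordered by inclusion. -/
theorem t_bull_free_chain {V : Type*} [Fintype V] [DecidableEq V]
    (t : ℕ) (ht : 3 ≤ t)
    (G : SimpleGraph V) [DecidableRel G.Adj]
    (hbf : IsEmpty (TBull t ↪g G))
    (C S : Finset V)
    (hC : ∀ a ∈ C, ∀ b ∈ C, a ≠ b → G.Adj a b)
    (hS : ∀ a ∈ S, ∀ b ∈ S, ¬ G.Adj a b)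
    (hdisj : Disjoint C S)
    (S1 : Finset V) (hS1 : S1 ⊆ S)
    (hnbr : ∀ x ∈ S1, ∃ c ∈ C, G.Adj x c)
    (hcov : ∀ x ∈ S1, ∀ y ∈ S1,
      (C.filter (G.Adj x) ∪ C.filter (G.Adj y)).card ≤ C.card - (t - 2)) :
    ∀ x ∈ S1, ∀ y ∈ S1,
      C.filter (G.Adj x) ⊆ C.filter (G.Adj y) ∨
      C.filter (G.Adj y) ⊆ C.filter (G.Adj x) := by
  intro x hx y hy
  by_cases hxyeq : x = y
  · subst hxyeq; left; exact Finset.Subset.refl _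
  by_contra hcon
  push_neg at hcon
  obtain ⟨h1, h2⟩ := hcon
  obtain ⟨a, ha, ha'⟩ := Finset.not_subset.mp h1
  obtain ⟨b, hb, hb'⟩ := Finset.not_subset.mp h2
  simp only [Finset.mem_filter, not_and] at ha hb ha' hb'
  have haC := ha.1
  have hxa : G.Adj x a := ha.2
  have hbC := hb.1
  have hyb : G.Adj y b := hb.2
  have hya : ¬ G.Adj y a := ha' haC
  have hxb : ¬ G.Adj x b := hb' hbC
  -- x, y are not in C
  have hxS : x ∈ S := hS1 hx
  have hyS : y ∈ S := hS1 hy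
  have hxC : x ∉ C := fun h => (Finset.disjoint_left.mp hdisj h) hxS
  have hyC : y ∉ C := fun h => (Finset.disjoint_left.mp hdisj h) hyS
  -- the uncovered part of C
  set U := C \ (C.filter (G.Adj x) ∪ C.filter (G.Adj y)) with hU
  have hsub : (C.filter (G.Adj x) ∪ C.filter (G.Adj y)) ⊆ C :=
    Finset.union_subset (Finset.filter_subset _ _) (Finset.filter_subset _ _)
  have hUcard : t - 2 ≤ U.card := by
    have h3 := Finset.card_sdiff_of_subset hsub
    have h4 := hcov x hx y hy
    have h5 : 0 < (C.filter (G.Adj x) ∪ C.filter (G.Adj y)).card :=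
      Finset.card_pos.mpr ⟨a, Finset.mem_union_left _ (Finset.mem_filter.mpr ⟨haC, hxa⟩)⟩
    have h6 := Finset.card_le_card hsub
    rw [hU]
    omega
  obtain ⟨D, hDU, hDcard⟩ := Finset.exists_subset_card_eq hUcard
  obtain ⟨k, rfl⟩ : ∃ k, t = k + 3 := ⟨t - 3, by omega⟩
  have hDk : D.card = k + 1 := by omega
  let E := D.equivFinOfCardEq hDk
  set e : Fin (k + 1) → V := fun i => ((E.symm i : D) : V) with he'
  have he : Function.Injective e := fun i j h =>
    E.symm.injective (Subtype.ext h)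
  have heD : ∀ i, e i ∈ D := fun i => (E.symm i).2
  have heC : ∀ i, e i ∈ C := fun i => (Finset.mem_sdiff.mp (hDU (heD i))).1
  have heNU : ∀ i, e i ∉ (C.filter (G.Adj x) ∪ C.filter (G.Adj y)) :=
    fun i => (Finset.mem_sdiff.mp (hDU (heD i))).2
  have hxe : ∀ i, ¬ G.Adj x (e i) := fun i h =>
    heNU i (Finset.mem_union_left _ (Finset.mem_filter.mpr ⟨heC i, h⟩))
  have hye : ∀ i, ¬ G.Adj y (e i) := fun i h =>
    heNU i (Finset.mem_union_right _ (Finset.mem_filter.mpr ⟨heC i, h⟩))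
  -- distinctness and cliqueness
  have habne : a ≠ b := fun h => hxb (h ▸ hxa)
  have hab : G.Adj a b := hC a haC b hbC habne
  have hae : ∀ i, G.Adj a (e i) := fun i =>
    hC a haC (e i) (heC i) (fun h => hxe i (h ▸ hxa))
  have hbe : ∀ i, G.Adj b (e i) := fun i =>
    hC b hbC (e i) (heC i) (fun h => hye i (h ▸ hyb))
  have hee : ∀ i j, i ≠ j → G.Adj (e i) (e j) := fun i j hij =>
    hC (e i) (heC i) (e j) (heC j) (fun h => hij (he h))
  have hxy : ¬ G.Adj x y := hS x hxS y hyS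
  obtain ⟨emb⟩ := build_tbull G k a b x y e he hab hae hbe hee hxa hyb hxb hya hxe hye hxy
    (fun h => hxC (h ▸ hbC)) (fun h => hyC (h ▸ haC))
    (fun i h => hxC (h ▸ heC i)) (fun i h => hyC (h ▸ heC i)) hxyeq
  exact hbf.false emb
end

section
/- Let G be a paw-free graph with maximum degree at most k−1, C a clique in G with |C| ≥ 2, and S an independent set disjoint from C. Then the number of vertices of S having at least one neighbor in C is at most 2(k−1). -/
/-!
If a vertex `v` sees some `c` of a clique `C` but misses two vertices `a, b ∈ C`, then
`c, a, b, v` induce a paw. So in a paw-free graph every vertex with a neighbour in `C` is adjacent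
to at least `|C| - 1` vertices of `C`, while each vertex of `C` has at most `k - 1` neighbours.
Double counting the edges between `C` and `N_S(C)` gives `|N_S(C)| (|C| - 1) ≤ |C| (k - 1)`,
and `|C| ≤ 2 (|C| - 1)` once `|C| ≥ 2`.
-/

/-- The paw: a triangle `0,1,2` with a pendant vertex `3` adjacent to `0`. -/
def Paw : SimpleGraph (Fin 4) :=
  SimpleGraph.fromRel (fun a b =>
    (a, b) ∈ [((0 : Fin 4), (1 : Fin 4)), (0, 2), (1, 2), (0, 3)])

open Finset SimpleGraph

lemma nonempty_paw_embedding {V : Type*} {G : SimpleGraph V} {c a b v : V}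
    (hca : G.Adj c a) (hcb : G.Adj c b) (hab : G.Adj a b) (hcv : G.Adj c v)
    (hav : ¬ G.Adj a v) (hbv : ¬ G.Adj b v) : Nonempty (Paw ↪g G) := by
  refine ⟨⟨⟨![c, a, b, v], fun i j h => ?_⟩, fun {i j} => ?_⟩⟩
  · fin_cases i <;> fin_cases j <;> simp at h ⊢ <;> grind [Adj.symm, Adj.ne]
  · show G.Adj (![c, a, b, v] i) (![c, a, b, v] j) ↔ Paw.Adj i j
    fin_cases i <;> fin_cases j <;> simp [Paw] <;> grind [Adj.symm]

section PawFree

variable {V : Type*} {G : SimpleGraph V} [DecidableRel G.Adj] {C : Finset V}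

lemma card_filter_not_adj_le_one (hpf : IsEmpty (Paw ↪g G)) (hC : G.IsClique (C : Set V))
    {v c : V} (hc : c ∈ C) (hvc : G.Adj v c) : #{a ∈ C | ¬ G.Adj v a} ≤ 1 := by
  refine card_le_one.2 fun a ha b hb => by_contra fun hab => ?_
  rw [mem_filter] at ha hb
  have hca : c ≠ a := by rintro rfl; exact ha.2 hvc
  have hcb : c ≠ b := by rintro rfl; exact hb.2 hvc
  exact hpf.elim (nonempty_paw_embedding (hC hc ha.1 hca) (hC hc hb.1 hcb) (hC ha.1 hb.1 hab)
    hvc.symm (fun h => ha.2 h.symm) (fun h => hb.2 h.symm)).some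

lemma card_sub_one_le_card_filter_adj (hpf : IsEmpty (Paw ↪g G)) (hC : G.IsClique (C : Set V))
    {v c : V} (hc : c ∈ C) (hvc : G.Adj v c) : #C - 1 ≤ #{a ∈ C | G.Adj v a} := by
  have := card_filter_not_adj_le_one hpf hC hc hvc
  have := card_filter_add_card_filter_not (s := C) (p := fun a => G.Adj v a)
  omega

lemma card_filter_exists_adj_mul_le [Fintype V] (hpf : IsEmpty (Paw ↪g G))
    (hC : G.IsClique (C : Set V)) {d : ℕ} (hΔ : ∀ v, G.degree v ≤ d) (S : Finset V) :
    #{v ∈ S | ∃ c ∈ C, G.Adj v c} * (#C - 1) ≤ #C * d := by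
  refine card_mul_le_card_mul G.Adj (fun v hv => ?_) (fun c _ => ?_)
  · obtain ⟨c, hc, hvc⟩ := (mem_filter.1 hv).2
    exact card_sub_one_le_card_filter_adj hpf hC hc hvc
  · calc #(bipartiteBelow G.Adj _ c) ≤ #(G.neighborFinset c) :=
          card_le_card fun v hv => (mem_neighborFinset G c v).2 (mem_filter.1 hv).2.symm
      _ = G.degree c := card_neighborFinset_eq_degree G c
      _ ≤ d := hΔ c

end PawFree

theorem paw_free_clique_nbhd_bound_general {V : Type*} [Fintype V]
    (G : SimpleGraph V) [DecidableRel G.Adj]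
    (hpf : IsEmpty (Paw ↪g G))
    (k : ℕ) (hΔ : ∀ v : V, G.degree v ≤ k - 1)
    (C S : Finset V)
    (hC : ∀ a ∈ C, ∀ b ∈ C, a ≠ b → G.Adj a b)
    (hC2 : 2 ≤ C.card) :
    (S.filter (fun v => ∃ c ∈ C, G.Adj v c)).card ≤ 2 * (k - 1) := by
  have hcount := card_filter_exists_adj_mul_le hpf hC hΔ S
  refine Nat.le_of_mul_le_mul_right ?_ (by omega : 0 < #C - 1)
  calc _ ≤ #C * (k - 1) := hcount
    _ ≤ 2 * (#C - 1) * (k - 1) := by gcongr; omega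
    _ = 2 * (k - 1) * (#C - 1) := by ring

/-- In a paw-free graph of maximum degree at most `k-1`, at most `2(k-1)`
vertices of an independent set `S` disjoint from a clique `C` of size at least
`2` have a neighbor in `C`. -/
theorem paw_free_clique_nbhd_bound {V : Type*} [Fintype V] [DecidableEq V]
    (G : SimpleGraph V) [DecidableRel G.Adj]
    (hpf : IsEmpty (Paw ↪g G))
    (k : ℕ) (hΔ : ∀ v : V, G.degree v ≤ k - 1)
    (C S : Finset V)
    (hC : ∀ a ∈ C, ∀ b ∈ C, a ≠ b → G.Adj a b)
    (hC2 : 2 ≤ C.card)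
    (hS : ∀ a ∈ S, ∀ b ∈ S, ¬ G.Adj a b)
    (hdisj : Disjoint C S) :
    (S.filter (fun v => ∃ c ∈ C, G.Adj v c)).card ≤ 2 * (k - 1) :=
  paw_free_clique_nbhd_bound_general G hpf k hΔ C S hC hC2
end

section
/- Let G be a bull-free graph with maximum degree at most k−1, C a clique in G, and S an independent set disjoint from C. Then the number of vertices of S having at least one neighbor in C is at most 2(k−1). -/
/-!
Write `A s = G.neighborsIn C s` for the set of neighbours of `s` in the clique `C`.
If `s, t ∈ S` have incomparable sets `A s`, `A t`, witnessed by `b ∈ A s \ A t` and `c ∈ A t \ A s`, then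
no vertex `a` can be adjacent to `b` and `c` but to neither `s` nor `t`: `s - b - c - t`
together with `a` would be an induced bull. Let `m ∈ N_S(C)` maximise `|A m|`. If `A m = C`, the
vertex `m` plays the role of `a` for every pair, so the sets `A s` form a chain and share a
vertex of `C`. Otherwise a vertex `c₀ ∈ C \ A m` plays that role for the `s` with `A s ⊆ A m`,
which again share a vertex of `C`, while every other `s` must be adjacent to `c₀`. Either way
`N_S(C)` lies in the union of two neighbourhoods, each of size at most `k - 1`.
-/

theorem Finset.exists_forall_mem_of_isChain {ι α : Type*} {T : Finset ι} {A : ι → Finset α}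
    (hT : T.Nonempty) (hA : ∀ i ∈ T, (A i).Nonempty)
    (hchain : IsChain (fun i j => A i ⊆ A j) (T : Set ι)) : ∃ x, ∀ i ∈ T, x ∈ A i := by
  obtain ⟨m, hmT, hmin⟩ := T.exists_min_image (fun i => (A i).card) hT
  obtain ⟨x, hx⟩ := hA m hmT
  refine ⟨x, fun i hi => ?_⟩
  rcases hchain.total hi hmT with him | hmi
  · rwa [← Finset.eq_of_subset_of_card_le him (hmin i hi)] at hx
  · exact hmi hx

namespace SimpleGraph

variable {V : Type*} {G : SimpleGraph V}

theorem nonempty_bull_embedding {a b c x y : V} (hab : G.Adj a b) (hac : G.Adj a c)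
    (hbc : G.Adj b c) (hxb : G.Adj x b) (hyc : G.Adj y c) (hxa : ¬G.Adj x a)
    (hxc : ¬G.Adj x c) (hya : ¬G.Adj y a) (hyb : ¬G.Adj y b) (hxy : ¬G.Adj x y) :
    Nonempty (Bull ↪g G) := by
  have nxa : x ≠ a := by rintro rfl; exact hxc hac
  have nxc : x ≠ c := by rintro rfl; exact hxa hac.symm
  have nya : y ≠ a := by rintro rfl; exact hyb hab
  have nyb : y ≠ b := by rintro rfl; exact hya hab.symm
  have nxy : x ≠ y := by rintro rfl; exact hyb hxb
  refine ⟨⟨⟨![a, b, c, x, y], fun i j h => ?_⟩, fun {i j} => ?_⟩⟩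
  · fin_cases i <;> fin_cases j <;>
      simp_all [hab.ne, hac.ne, hbc.ne, hxb.ne, hyc.ne, Ne.symm]
  · fin_cases i <;> fin_cases j <;> simp [Bull, adj_comm] <;> tauto

theorem IsIndepSet.not_adj {s : Set V} (hs : G.IsIndepSet s) {v w : V} (hv : v ∈ s)
    (hw : w ∈ s) : ¬G.Adj v w := by
  rcases eq_or_ne v w with rfl | hvw
  exacts [G.irrefl, hs hv hw hvw]

variable [DecidableRel G.Adj]

def neighborsIn (G : SimpleGraph V) [DecidableRel G.Adj] (C : Finset V) (v : V) : Finset V :=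
  {c ∈ C | G.Adj v c}

@[simp]
theorem mem_neighborsIn {C : Finset V} {v c : V} : c ∈ G.neighborsIn C v ↔ c ∈ C ∧ G.Adj v c :=
  Finset.mem_filter

variable {C : Finset V}

theorem neighborsIn_subset_or_subset (hbf : IsEmpty (Bull ↪g G))
    (hC : G.IsClique (C : Set V)) {s t a : V} (hst : ¬G.Adj s t)
    (has : ¬G.Adj a s) (hat : ¬G.Adj a t) (has' : ∀ c ∈ G.neighborsIn C s, G.Adj a c)
    (hat' : ∀ c ∈ G.neighborsIn C t, G.Adj a c) :
    G.neighborsIn C s ⊆ G.neighborsIn C t ∨ G.neighborsIn C t ⊆ G.neighborsIn C s := by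
  by_contra! h
  obtain ⟨b, hbs, hbt⟩ := Finset.not_subset.mp h.1
  obtain ⟨c, hct, hcs⟩ := Finset.not_subset.mp h.2
  simp only [mem_neighborsIn, not_and] at hbs hbt hct hcs
  have hbc : G.Adj b c := hC hbs.1 hct.1 (by rintro rfl; exact hcs hbs.1 hbs.2)
  exact hbf.false (nonempty_bull_embedding
    (has' b (mem_neighborsIn.mpr hbs)) (hat' c (mem_neighborsIn.mpr hct)) hbc hbs.2 hct.2
    (fun h => has h.symm) (hcs hct.1) (fun h => hat h.symm) (hbt hbs.1) hst).some

theorem exists_forall_adj_of_bullFree (hbf : IsEmpty (Bull ↪g G))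
    (hC : G.IsClique (C : Set V)) {T : Finset V} (hT : G.IsIndepSet (T : Set V))
    (hTne : T.Nonempty) (hTC : ∀ s ∈ T, (G.neighborsIn C s).Nonempty) {a : V}
    (ha : ∀ s ∈ T, ∀ c ∈ G.neighborsIn C s, G.Adj a c) (haT : ∀ s ∈ T, ¬G.Adj a s) :
    ∃ c, ∀ s ∈ T, G.Adj s c := by
  have hchain : IsChain (fun s t => G.neighborsIn C s ⊆ G.neighborsIn C t) (T : Set V) :=
    fun s hs t ht hst => neighborsIn_subset_or_subset hbf hC (hT hs ht hst) (haT s hs) (haT t ht)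
      (ha s hs) (ha t ht)
  obtain ⟨c, hc⟩ := Finset.exists_forall_mem_of_isChain hTne hTC hchain
  exact ⟨c, fun s hs => (mem_neighborsIn.mp (hc s hs)).2⟩

theorem exists_adj_or_adj_of_bullFree (hbf : IsEmpty (Bull ↪g G))
    (hC : G.IsClique (C : Set V)) {S : Finset V} (hS : G.IsIndepSet (S : Set V))
    (hN : {s ∈ S | (G.neighborsIn C s).Nonempty}.Nonempty) :
    ∃ c₁ c₂, ∀ s ∈ S, (G.neighborsIn C s).Nonempty → G.Adj s c₁ ∨ G.Adj s c₂ := by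
  classical
  set N := {s ∈ S | (G.neighborsIn C s).Nonempty}
  have hNS : (N : Set V) ⊆ S := fun s hs => (Finset.mem_filter.mp hs).1
  have hNC : ∀ s ∈ N, (G.neighborsIn C s).Nonempty := fun s hs => (Finset.mem_filter.mp hs).2
  obtain ⟨m, hmN, hmax⟩ := N.exists_max_image (fun s => (G.neighborsIn C s).card) hN
  have hmS : m ∈ S := hNS hmN
  by_cases hc₀ : ∃ c₀ ∈ C, ¬G.Adj m c₀
  · obtain ⟨c₀, hc₀C, hmc₀⟩ := hc₀
    have hc₀m : c₀ ∉ G.neighborsIn C m := fun h => hmc₀ (mem_neighborsIn.mp h).2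
    have hc₀adj : ∀ c ∈ G.neighborsIn C m, G.Adj c₀ c := fun c hc =>
      hC hc₀C (mem_neighborsIn.mp hc).1 (by rintro rfl; exact hc₀m hc)
    set T := {s ∈ N | G.neighborsIn C s ⊆ G.neighborsIn C m}
    have hTN : T ⊆ N := Finset.filter_subset _ _
    have hTm : ∀ s ∈ T, G.neighborsIn C s ⊆ G.neighborsIn C m :=
      fun s hs => (Finset.mem_filter.mp hs).2
    obtain ⟨c₁, hc₁⟩ := exists_forall_adj_of_bullFree hbf hC
      (hS.mono (fun s hs => hNS (hTN hs))) ⟨m, Finset.mem_filter.mpr ⟨hmN, subset_rfl⟩⟩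
      (fun s hs => hNC s (hTN hs)) (fun s hs c hc => hc₀adj c (hTm s hs hc))
      (fun s hs h => hc₀m (hTm s hs (mem_neighborsIn.mpr ⟨hc₀C, h.symm⟩)))
    refine ⟨c₁, c₀, fun s hs hsC => ?_⟩
    have hsN : s ∈ N := Finset.mem_filter.mpr ⟨hs, hsC⟩
    by_cases hsm : G.neighborsIn C s ⊆ G.neighborsIn C m
    · exact Or.inl (hc₁ s (Finset.mem_filter.mpr ⟨hsN, hsm⟩))
    · -- `A s` and `A m` are incomparable, as `A m ⊆ A s` would force equality by maximality
      refine Or.inr (by_contra fun hsc₀ => ?_)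
      have hc₀s : c₀ ∉ G.neighborsIn C s := fun h => hsc₀ (mem_neighborsIn.mp h).2
      rcases neighborsIn_subset_or_subset hbf hC (hS.not_adj hs hmS) (fun h => hsc₀ h.symm)
        (fun h => hmc₀ h.symm)
        (fun c hc => hC hc₀C (mem_neighborsIn.mp hc).1 (by rintro rfl; exact hc₀s hc))
        hc₀adj with h | h
      · exact hsm h
      · exact hsm (Finset.eq_of_subset_of_card_le h (hmax s hsN)).ge
  · push Not at hc₀
    obtain ⟨c, hc⟩ := exists_forall_adj_of_bullFree hbf hC (hS.mono hNS) hN hNC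
      (fun s _ c hc => hc₀ c (mem_neighborsIn.mp hc).1) (fun s hs => hS.not_adj hmS (hNS hs))
    exact ⟨c, c, fun s hs hsC => Or.inl (hc s (Finset.mem_filter.mpr ⟨hs, hsC⟩))⟩

end SimpleGraph

open SimpleGraph in
theorem bull_free_clique_nbhd_bound_general {V : Type*} [Fintype V]
    (G : SimpleGraph V) [DecidableRel G.Adj]
    (hbf : IsEmpty (Bull ↪g G))
    (k : ℕ) (hΔ : ∀ v : V, G.degree v ≤ k - 1)
    (C S : Finset V)
    (hC : ∀ a ∈ C, ∀ b ∈ C, a ≠ b → G.Adj a b)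
    (hS : ∀ a ∈ S, ∀ b ∈ S, ¬ G.Adj a b) :
    (S.filter (fun v => ∃ c ∈ C, G.Adj v c)).card ≤ 2 * (k - 1) := by
  classical
  rcases (S.filter fun v => ∃ c ∈ C, G.Adj v c).eq_empty_or_nonempty with hN | ⟨s₀, hs₀⟩
  · simp [hN]
  have hnbr : ∀ s, (G.neighborsIn C s).Nonempty ↔ ∃ c ∈ C, G.Adj s c := by
    simp [Finset.Nonempty]
  obtain ⟨c₁, c₂, hc⟩ := exists_adj_or_adj_of_bullFree hbf (C := C) hC
    (fun a ha b hb _ => hS a ha b hb) ⟨s₀, by simpa [hnbr] using hs₀⟩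
  calc _ ≤ (G.neighborFinset c₁ ∪ G.neighborFinset c₂).card := Finset.card_le_card fun s hs => by
        obtain ⟨hsS, hsC⟩ := Finset.mem_filter.mp hs
        simpa [adj_comm] using hc s hsS ((hnbr s).mpr hsC)
    _ ≤ G.degree c₁ + G.degree c₂ := Finset.card_union_le _ _
    _ ≤ 2 * (k - 1) := by linarith [hΔ c₁, hΔ c₂]

/-- In a bull-free graph of maximum degree at most `k-1`, at most `2(k-1)`
vertices of an independent set `S` disjoint from a clique `C` have a neighbor
in `C`. -/
theorem bull_free_clique_nbhd_bound {V : Type*} [Fintype V] [DecidableEq V]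
    (G : SimpleGraph V) [DecidableRel G.Adj]
    (hbf : IsEmpty (Bull ↪g G))
    (k : ℕ) (hΔ : ∀ v : V, G.degree v ≤ k - 1)
    (C S : Finset V)
    (hC : ∀ a ∈ C, ∀ b ∈ C, a ≠ b → G.Adj a b)
    (hS : ∀ a ∈ S, ∀ b ∈ S, ¬ G.Adj a b)
    (hdisj : Disjoint C S) :
    (S.filter (fun v => ∃ c ∈ C, G.Adj v c)).card ≤ 2 * (k - 1) :=
  bull_free_clique_nbhd_bound_general G hbf k hΔ C S hC hS
end

section
/- Let G be a K_{1,t}-free graph (t ≥ 1) with no isolated vertices, and suppose G has a minimal vertex cover X of size at most k−1 and does not have one of size at least k. Then |V(G)| ≤ t(k−1). -/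
/-- The star `K_{1,t}` with center `0` and `t` leaves. -/
def StarGraph (t : ℕ) : SimpleGraph (Fin (t + 1)) :=
  SimpleGraph.fromRel (fun a b => a = 0 ∨ b = 0)

/-- Linear kernel for MMVC on `K_{1,t}`-free graphs: if a `K_{1,t}`-free graph
with no isolated vertices has a minimal vertex cover of size at most `k-1` but
none of size at least `k`, then it has at most `t(k-1)` vertices. -/
theorem star_free_kernel {V : Type*} [Fintype V] [DecidableEq V]
    (t : ℕ) (ht : 1 ≤ t)
    (G : SimpleGraph V)
    (hsf : IsEmpty (StarGraph t ↪g G))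
    (hiso : ∀ v : V, ∃ u : V, G.Adj v u)
    (k : ℕ) (hk : 1 ≤ k)
    (X : Finset V) (hX : IsMinVC G X) (hXk : X.card ≤ k - 1)
    (hno : ¬ ∃ Y : Finset V, IsMinVC G Y ∧ k ≤ Y.card) :
    Fintype.card V ≤ t * (k - 1) := by
  classical
  obtain ⟨t', rfl⟩ : ∃ t', t = t' + 1 := ⟨t - 1, by omega⟩
  set S : Finset V := Xᶜ with hS
  have hSind : ∀ a ∈ S, ∀ b ∈ S, ¬ G.Adj a b := by
    intro a ha b hb hab
    rcases hX.1 hab with h | h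
    · exact (Finset.mem_compl.mp ha) h
    · exact (Finset.mem_compl.mp hb) h
  have key : ∀ x : V, (S.filter (fun s => G.Adj x s)).card ≤ t' := by
    intro x
    by_contra h
    push_neg at h
    obtain ⟨T, hTsub, hTcard⟩ := Finset.exists_subset_card_eq h
    let e := (T.equivFinOfCardEq hTcard).symm
    have hmem : ∀ i : Fin (t' + 1), (e i : V) ∈ S ∧ G.Adj x (e i) := by
      intro i
      have := hTsub (e i).2
      exact Finset.mem_filter.mp this
    let f : Fin (t' + 1 + 1) → V := Fin.cases x (fun i => (e i : V))
    have hinj : Function.Injective f := by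
      intro a b hab
      induction a using Fin.cases with
      | zero =>
        induction b using Fin.cases with
        | zero => rfl
        | succ j =>
          simp only [f, Fin.cases_zero, Fin.cases_succ] at hab
          exact absurd (hmem j).2 (by rw [hab]; exact G.irrefl)
      | succ i =>
        induction b using Fin.cases with
        | zero =>
          simp only [f, Fin.cases_zero, Fin.cases_succ] at hab
          exact absurd (hmem i).2 (by rw [hab.symm]; exact G.irrefl)
        | succ j =>
          have : e i = e j := Subtype.ext hab
          have : i = j := e.injective this
          rw [this]
    have hmap : ∀ {a b : Fin (t' + 1 + 1)},
        G.Adj (f a) (f b) ↔ (StarGraph (t' + 1)).Adj a b := by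
      intro a b
      simp only [StarGraph, SimpleGraph.fromRel_adj]
      induction a using Fin.cases with
      | zero =>
        induction b using Fin.cases with
        | zero => simp
        | succ j =>
          simp [f, Fin.succ_ne_zero, (Fin.succ_ne_zero j).symm, (hmem j).2]
      | succ i =>
        induction b using Fin.cases with
        | zero =>
          simp [f, Fin.succ_ne_zero, ((hmem i).2).symm]
        | succ j =>
          simp [f, Fin.succ_ne_zero, hSind _ (hmem i).1 _ (hmem j).1]
    exact hsf.elim ⟨⟨f, hinj⟩, hmap⟩
  have hScard : S.card ≤ t' * X.card := by
    have hsub : S ⊆ X.biUnion (fun x => S.filter (fun s => G.Adj x s)) := by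
      intro s hs
      obtain ⟨u, hu⟩ := hiso s
      have hu' : u ∈ X := by
        rcases hX.1 hu with h | h
        · exact absurd h (Finset.mem_compl.mp hs)
        · exact h
      exact Finset.mem_biUnion.mpr ⟨u, hu', Finset.mem_filter.mpr ⟨hs, hu.symm⟩⟩
    calc S.card ≤ _ := Finset.card_le_card hsub
      _ ≤ ∑ x ∈ X, (S.filter (fun s => G.Adj x s)).card := Finset.card_biUnion_le
      _ ≤ ∑ _x ∈ X, t' := Finset.sum_le_sum (fun x _ => key x)
      _ = t' * X.card := by rw [Finset.sum_const, smul_eq_mul, mul_comm]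
  have hV : Fintype.card V = X.card + S.card := by
    have h1 : S.card = Fintype.card V - X.card := by rw [hS, Finset.card_compl]
    have h2 := Finset.card_le_univ X
    omega
  have hX' : X.card ≤ k - 1 := hXk
  nlinarith [hScard, hV, hX', Nat.mul_le_mul_left t' hX']
end

section
/- Let G be a finite simple graph with no isolated vertices whose vertex set can be partitioned into c independent sets S₁, …, S_c. If G has no minimal vertex cover of size at least k, then |V(G)| ≤ c(k−1). -/
/-!
Each colour class `S` is independent, so its complement is a vertex cover; a minimal vertex cover
inside that complement misses every vertex of `S` and therefore contains the neighbourhood `N(S)`.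
Hence `|N(S)| ≤ k - 1` for each of the `c` classes, and without isolated vertices these `c`
neighbourhoods cover the whole graph.
-/

open Finset

section

variable {V : Type*} {G : SimpleGraph V}

theorem isMinVC_iff_minimal {X : Finset V} : IsMinVC G X ↔ Minimal (IsVC G) X :=
  minimal_iff_forall_lt.symm

theorem IsVC.exists_isMinVC_subset {X : Finset V} (hX : IsVC G X) : ∃ Y ⊆ X, IsMinVC G Y := by
  obtain ⟨Y, hYX, hY⟩ := exists_minimal_le_of_wellFoundedLT (IsVC G) X hX
  exact ⟨Y, hYX, isMinVC_iff_minimal.2 hY⟩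

section Fintype

variable [Fintype V] [DecidableEq V]

theorem isVC_compl_of_isIndepSet {S : Finset V} (hS : G.IsIndepSet S) : IsVC G Sᶜ := by
  intro a b hab
  by_contra! h
  simp only [mem_compl, not_not] at h
  exact hS h.1 h.2 hab.ne hab

variable [DecidableRel G.Adj]

theorem exists_isMinVC_biUnion_neighborFinset_subset {S : Finset V} (hS : G.IsIndepSet S) :
    ∃ Y, IsMinVC G Y ∧ S.biUnion (fun u => G.neighborFinset u) ⊆ Y := by
  obtain ⟨Y, hYS, hY⟩ := (isVC_compl_of_isIndepSet hS).exists_isMinVC_subset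
  refine ⟨Y, hY, fun v hv => ?_⟩
  obtain ⟨u, huS, huv⟩ := mem_biUnion.1 hv
  have huY : u ∉ Y := fun hu => mem_compl.1 (hYS hu) huS
  exact (hY.1 ((G.mem_neighborFinset u v).1 huv)).resolve_left huY

theorem card_biUnion_neighborFinset_lt {k : ℕ} (hno : ¬ ∃ X : Finset V, IsMinVC G X ∧ k ≤ #X)
    {S : Finset V} (hS : G.IsIndepSet S) : #(S.biUnion (fun u => G.neighborFinset u)) < k := by
  obtain ⟨Y, hY, hNY⟩ := exists_isMinVC_biUnion_neighborFinset_subset hS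
  exact (card_le_card hNY).trans_lt (not_le.1 fun hkY => hno ⟨Y, hY, hkY⟩)

end Fintype

end

theorem colorable_kernel_general {V : Type*} [Fintype V]
    (G : SimpleGraph V) (c k : ℕ)
    (f : V → Fin c) (hf : ∀ a b : V, G.Adj a b → f a ≠ f b)
    (hiso : ∀ v : V, ∃ u : V, G.Adj v u)
    (hno : ¬ ∃ X : Finset V, IsMinVC G X ∧ k ≤ X.card) :
    Fintype.card V ≤ c * (k - 1) := by
  classical
  let N : Fin c → Finset V := fun i =>
    ({v | f v = i} : Finset V).biUnion fun u => G.neighborFinset u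
  have hN : ∀ i ∈ univ, #(N i) ≤ k - 1 := fun i _ =>
    Nat.le_sub_one_of_lt <| card_biUnion_neighborFinset_lt hno fun a ha b hb _ hab =>
      hf a b hab ((mem_filter.1 ha).2.trans (mem_filter.1 hb).2.symm)
  have hcover : univ ⊆ univ.biUnion N := fun v _ => by
    obtain ⟨u, hvu⟩ := hiso v
    simpa [N] using ⟨u, hvu.symm⟩
  calc Fintype.card V ≤ #(univ.biUnion N) := card_le_card hcover
    _ ≤ #(univ : Finset (Fin c)) * (k - 1) := card_biUnion_le_card_mul _ _ _ hN
    _ = c * (k - 1) := by rw [card_univ, Fintype.card_fin]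

/-- Linear kernel for MMVC on properly `c`-colorable graphs: if a graph with no
isolated vertices admits a partition of its vertex set into `c` independent
sets and has no minimal vertex cover of size at least `k`, then it has at most
`c(k-1)` vertices. -/
theorem colorable_kernel {V : Type*} [Fintype V] [DecidableEq V]
    (G : SimpleGraph V) (c k : ℕ) (hk : 1 ≤ k)
    (f : V → Fin c) (hf : ∀ a b : V, G.Adj a b → f a ≠ f b)
    (hiso : ∀ v : V, ∃ u : V, G.Adj v u)
    (hno : ¬ ∃ X : Finset V, IsMinVC G X ∧ k ≤ X.card) :
    Fintype.card V ≤ c * (k - 1) :=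
  colorable_kernel_general G c k f hf hiso hno
end
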